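/- arXiv:2104.14183 — 9 statements merged into one kernel-verified Lean document; each statement's English description precedes it below -/
import Mathlib

section
/- If the directed graph associated to σ is strongly connected, then the kernel of A is the one-dimensional subspace spanned by e = (1,...,1)^T. -/
open Matrix Finset

theorem ker_A_eq_span_e (N : ℕ) (σ A : Matrix (Fin N) (Fin N) ℝ)
    (hσ : ∀ i j, i ≠ j → 0 ≤ σ i j)
    (hoff : ∀ i j, i ≠ j → A i j = σ i j)
    (hdiag : ∀ i, A i i = -∑ k ∈ Finset.univ.filter (fun k => k ≠ i), σ i k)
    (hconn : ∀ i j : Fin N, i ≠ j → Relation.TransGen (fun a b => 0 < σ a b) i j) :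
    ∀ y : Fin N → ℝ, A.mulVec y = 0 ↔ ∃ c : ℝ, y = fun _ => c := by
  have rowsum : ∀ i, ∑ j, A i j = 0 := by
    intro i
    rw [← Finset.sum_filter_add_sum_filter_not Finset.univ (fun k => k ≠ i) (fun k => A i k)]
    have h1 : ∑ k ∈ Finset.univ.filter (fun k => ¬ k ≠ i), A i k = A i i := by
      rw [Finset.sum_filter]; simp
    rw [h1, hdiag i, Finset.sum_congr rfl (fun k hk => hoff i k (Ne.symm (Finset.mem_filter.mp hk).2))]
    ring
  intro y
  constructor
  · intro hA
    rcases Nat.eq_zero_or_pos N with hN | hN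
    · exact ⟨0, funext fun i => absurd i.2 (by omega)⟩
    · obtain ⟨i0, -, hi0⟩ := Finset.exists_max_image Finset.univ y ⟨⟨0, hN⟩, Finset.mem_univ _⟩
      have key : ∀ i : Fin N, (∀ j, y j ≤ y i) → ∀ j, 0 < σ i j → y j = y i := by
        intro i hi j hij
        have hrow : (A.mulVec y) i = 0 := congrFun hA i
        have heq : (A.mulVec y) i
            = ∑ k ∈ Finset.univ.filter (fun k => k ≠ i), σ i k * (y k - y i) := by
          rw [Matrix.mulVec, dotProduct,
            ← Finset.sum_filter_add_sum_filter_not Finset.univ (fun k => k ≠ i)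
              (fun k => A i k * y k)]
          have h1 : ∑ k ∈ Finset.univ.filter (fun k => ¬ k ≠ i), A i k * y k = A i i * y i := by
            rw [Finset.sum_filter]; simp
          rw [h1, hdiag i,
            Finset.sum_congr rfl (fun k hk => by
              rw [hoff i k (Ne.symm (Finset.mem_filter.mp hk).2)]),
            Finset.sum_congr rfl (fun k _ => mul_sub (σ i k) (y k) (y i)),
            Finset.sum_sub_distrib, ← Finset.sum_mul]
          ring
        rw [heq] at hrow
        by_cases hji : j = i
        · rw [hji]
        · have hall : ∀ k ∈ Finset.univ.filter (fun k => k ≠ i), σ i k * (y k - y i) = 0 := by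
            apply (Finset.sum_eq_zero_iff_of_nonpos _).mp hrow
            intro k hk
            have h1 := hσ i k (Ne.symm (Finset.mem_filter.mp hk).2)
            nlinarith [hi k]
          have h2 := hall j (Finset.mem_filter.mpr ⟨Finset.mem_univ _, hji⟩)
          rcases mul_eq_zero.mp h2 with h | h
          · linarith
          · linarith
      have hmax : ∀ j, y j = y i0 := by
        intro j
        by_cases hj : j = i0
        · rw [hj]
        · have h := hconn i0 j (Ne.symm hj)
          clear hj
          induction h with
          | single hb => exact key i0 (fun k => hi0 k (Finset.mem_univ k)) _ hb
          | tail hab hbc ih =>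
            rw [← ih]
            exact key _ (fun k => ih ▸ hi0 k (Finset.mem_univ k)) _ hbc
      exact ⟨y i0, funext hmax⟩
  · rintro ⟨c, rfl⟩
    funext i
    simp only [Matrix.mulVec, dotProduct, Pi.zero_apply]
    rw [← Finset.sum_mul, rowsum, zero_mul]
end

section
/- If the directed graph associated to σ is strongly connected, then ker A = ker A², i.e., A² y = 0 implies A y = 0. -/
open Matrix Finset

lemma mulVec_expand_aux {N : ℕ} (σ A : Matrix (Fin N) (Fin N) ℝ)
    (hoff : ∀ i j, i ≠ j → A i j = σ i j)
    (hdiag : ∀ i, A i i = -∑ k ∈ Finset.univ.filter (fun k => k ≠ i), σ i k)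
    (z : Fin N → ℝ) (a : Fin N) :
    A.mulVec z a = ∑ k ∈ Finset.univ.erase a, σ a k * (z k - z a) := by
  have h1 : (Finset.univ.filter (fun k => k ≠ a) : Finset (Fin N)) = Finset.univ.erase a := by
    ext k; simp [Finset.mem_erase, and_comm]
  have h2 : A.mulVec z a = ∑ k, A a k * z k := by
    simp [Matrix.mulVec, dotProduct]
  rw [h2, ← Finset.sum_erase_add _ _ (Finset.mem_univ a), hdiag, h1]
  have h3 : ∑ k ∈ Finset.univ.erase a, A a k * z k
      = ∑ k ∈ Finset.univ.erase a, σ a k * z k :=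
    Finset.sum_congr rfl (fun k hk => by
      rw [hoff a k (Ne.symm (Finset.ne_of_mem_erase hk))])
  have h4 : ∑ k ∈ Finset.univ.erase a, σ a k * (z k - z a)
      = ∑ k ∈ Finset.univ.erase a, σ a k * z k
        - ∑ k ∈ Finset.univ.erase a, σ a k * z a := by
    rw [← Finset.sum_sub_distrib]
    exact Finset.sum_congr rfl (fun k _ => by ring)
  rw [h3, h4, ← Finset.sum_mul]
  ring

lemma const_of_ker_aux {N : ℕ} (σ A : Matrix (Fin N) (Fin N) ℝ)
    (hσ : ∀ i j, i ≠ j → 0 ≤ σ i j)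
    (hoff : ∀ i j, i ≠ j → A i j = σ i j)
    (hdiag : ∀ i, A i i = -∑ k ∈ Finset.univ.filter (fun k => k ≠ i), σ i k)
    (hconn : ∀ i j : Fin N, i ≠ j → Relation.TransGen (fun a b => 0 < σ a b) i j)
    (z : Fin N → ℝ) (hz : A.mulVec z = 0) (i j : Fin N) : z i = z j := by
  have hne : (Finset.univ : Finset (Fin N)).Nonempty := ⟨i, Finset.mem_univ i⟩
  obtain ⟨m, -, hm⟩ := Finset.exists_max_image Finset.univ z hne
  have step : ∀ a b : Fin N, z a = z m → 0 < σ a b → z b = z m := by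
    intro a b ha hab
    by_cases hba : b = a
    · rw [hba]; exact ha
    · have hza : A.mulVec z a = 0 := by rw [hz]; rfl
      rw [mulVec_expand_aux σ A hoff hdiag] at hza
      have hnonpos : ∀ k ∈ Finset.univ.erase a, σ a k * (z k - z a) ≤ 0 := by
        intro k hk
        have hk' : k ≠ a := Finset.ne_of_mem_erase hk
        have h1 : 0 ≤ σ a k := hσ a k (Ne.symm hk')
        have h2 : z k - z a ≤ 0 := by
          have := hm k (Finset.mem_univ k)
          rw [ha]; linarith
        exact mul_nonpos_of_nonneg_of_nonpos h1 h2
      have hall := (Finset.sum_eq_zero_iff_of_nonpos hnonpos).mp hza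
      have hb : σ a b * (z b - z a) = 0 :=
        hall b (Finset.mem_erase.mpr ⟨hba, Finset.mem_univ b⟩)
      have : z b - z a = 0 := by
        rcases mul_eq_zero.mp hb with h | h
        · exact absurd h (ne_of_gt hab)
        · exact h
      rw [← ha]; linarith
  have key0 : ∀ b : Fin N, Relation.TransGen (fun a b => 0 < σ a b) m b → z b = z m := by
    intro b h
    induction h with
    | single h => exact step m _ rfl h
    | tail _ h ih => exact step _ _ ih h
  have key : ∀ b : Fin N, z b = z m := by
    intro b
    by_cases hbm : b = m
    · rw [hbm]
    · exact key0 b (hconn m b (Ne.symm hbm))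
  rw [key i, key j]

theorem ker_A_eq_ker_A_sq (N : ℕ) (σ A : Matrix (Fin N) (Fin N) ℝ)
    (hσ : ∀ i j, i ≠ j → 0 ≤ σ i j)
    (hoff : ∀ i j, i ≠ j → A i j = σ i j)
    (hdiag : ∀ i, A i i = -∑ k ∈ Finset.univ.filter (fun k => k ≠ i), σ i k)
    (hconn : ∀ i j : Fin N, i ≠ j → Relation.TransGen (fun a b => 0 < σ a b) i j) :
    {y : Fin N → ℝ | A.mulVec y = 0} = {y : Fin N → ℝ | A.mulVec (A.mulVec y) = 0} := by
  ext y
  simp only [Set.mem_setOf_eq]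
  constructor
  · intro h; rw [h, Matrix.mulVec_zero]
  · intro h
    set z := A.mulVec y with hzdef
    have hconst : ∀ i j : Fin N, z i = z j :=
      const_of_ker_aux σ A hσ hoff hdiag hconn z h
    funext i
    -- use max and min of y
    have hne : (Finset.univ : Finset (Fin N)).Nonempty := ⟨i, Finset.mem_univ i⟩
    obtain ⟨m, -, hm⟩ := Finset.exists_max_image Finset.univ y hne
    obtain ⟨m', -, hm'⟩ := Finset.exists_min_image Finset.univ y hne
    have hzm : z m ≤ 0 := by
      rw [hzdef, mulVec_expand_aux σ A hoff hdiag]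
      apply Finset.sum_nonpos
      intro k hk
      have hk' : k ≠ m := Finset.ne_of_mem_erase hk
      have h1 : 0 ≤ σ m k := hσ m k (Ne.symm hk')
      have h2 : y k - y m ≤ 0 := by have := hm k (Finset.mem_univ k); linarith
      exact mul_nonpos_of_nonneg_of_nonpos h1 h2
    have hzm' : 0 ≤ z m' := by
      rw [hzdef, mulVec_expand_aux σ A hoff hdiag]
      apply Finset.sum_nonneg
      intro k hk
      have hk' : k ≠ m' := Finset.ne_of_mem_erase hk
      have h1 : 0 ≤ σ m' k := hσ m' k (Ne.symm hk')
      have h2 : 0 ≤ y k - y m' := by have := hm' k (Finset.mem_univ k); linarith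
      exact mul_nonneg h1 h2
    have hmm : z m = z m' := hconst m m'
    have : z m = 0 := le_antisymm hzm (hmm ▸ hzm')
    have : z i = 0 := by rw [hconst i m, this]
    simpa using this
end

section
/- If the directed graph associated to σ is strongly connected, then 0 is a simple eigenvalue of A, and the kernel of the transpose A^T is one-dimensional. -/
open Matrix Finset

/-! At a maximum `i` of `x`, every term of `(A x) i = ∑ k, σ i k * (x k - x i)` is `≤ 0`. If
`A x = 0` they all vanish, so the maximum propagates along the edges of the strongly connected
graph and `ker A` consists of the constant vectors. If `A x` is a constant `c`, the same
maximum principle gives `c ≤ 0` at a maximum of `x` and `c ≥ 0` at a minimum, so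
`ker A² = ker A`: the generalized `0`-eigenspace is `ker A`, and `0` is a simple root of the
characteristic polynomial. Finally `A` and `Aᵀ` have the same rank. -/

theorem Module.End.maxGenEigenspace_zero_eq_ker {R M : Type*} [CommRing R] [AddCommGroup M]
    [Module R M] {f : Module.End R M} (h : ∀ x, f (f x) = 0 → f x = 0) :
    f.maxGenEigenspace 0 = LinearMap.ker f := by
  ext x
  simp only [Module.End.mem_maxGenEigenspace, zero_smul, sub_zero, LinearMap.mem_ker]
  constructor
  · rintro ⟨k, hk⟩
    induction k generalizing x with
    | zero => simp_all
    | succ k ih => exact h x (ih (f x) (by rwa [pow_succ, Module.End.mul_apply] at hk))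
  · exact fun hx => ⟨1, by simpa using hx⟩

theorem Matrix.rootMultiplicity_zero_charpoly_eq_finrank_ker {ι K : Type*} [Fintype ι]
    [DecidableEq ι] [Field K] (A : Matrix ι ι K)
    (h : ∀ x, A *ᵥ (A *ᵥ x) = 0 → A *ᵥ x = 0) :
    A.charpoly.rootMultiplicity 0 = Module.finrank K (LinearMap.ker A.mulVecLin) := by
  rw [Polynomial.rootMultiplicity_eq_natTrailingDegree', ← charpoly_mulVecLin,
    ← LinearMap.finrank_maxGenEigenspace_zero_eq, Module.End.maxGenEigenspace_zero_eq_ker h]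

theorem Matrix.finrank_ker_mulVecLin_transpose {ι K : Type*} [Fintype ι] [Field K]
    (A : Matrix ι ι K) :
    Module.finrank K (LinearMap.ker Aᵀ.mulVecLin) =
      Module.finrank K (LinearMap.ker A.mulVecLin) := by
  have hA := LinearMap.finrank_range_add_finrank_ker A.mulVecLin
  have hAT := LinearMap.finrank_range_add_finrank_ker Aᵀ.mulVecLin
  have hrank := A.rank_transpose
  rw [Matrix.rank, Matrix.rank] at hrank
  omega

theorem Matrix.mulVec_apply_eq_sum_mul_sub {ι R : Type*} [Fintype ι] [DecidableEq ι] [CommRing R]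
    {σ A : Matrix ι ι R} (hoff : ∀ i j, i ≠ j → A i j = σ i j)
    (hdiag : ∀ i, A i i = -∑ k ∈ univ.filter (fun k => k ≠ i), σ i k) (x : ι → R) (i : ι) :
    (A *ᵥ x) i = ∑ k, σ i k * (x k - x i) := by
  have hoff' : ∑ k ∈ univ.erase i, A i k * x k = ∑ k ∈ univ.erase i, σ i k * x k :=
    sum_congr rfl fun k hk => by rw [hoff i k (ne_of_mem_erase hk).symm]
  rw [mulVec, dotProduct, ← sum_erase_add _ _ (mem_univ i), hoff', hdiag, filter_ne',
    ← sum_erase_add _ _ (mem_univ i), sub_self, mul_zero, add_zero]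
  simp only [mul_sub, sum_sub_distrib, sum_mul, neg_mul]
  ring

theorem mul_sub_nonpos_of_isMax {ι R : Type*} [Ring R] [PartialOrder R] [IsOrderedRing R]
    {σ : Matrix ι ι R} (hσ : ∀ i j, i ≠ j → 0 ≤ σ i j) {x : ι → R} {i : ι}
    (hmax : ∀ k, x k ≤ x i) (k : ι) : σ i k * (x k - x i) ≤ 0 := by
  rcases eq_or_ne i k with rfl | hik
  · simp
  · exact mul_nonpos_of_nonneg_of_nonpos (hσ i k hik) (sub_nonpos.2 (hmax k))

section RateMatrix

variable {ι R : Type*} [Fintype ι] [Field R] [LinearOrder R] [IsStrictOrderedRing R]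
  {σ A : Matrix ι ι R}

theorem mulVec_apply_nonpos_of_isMax (hσ : ∀ i j, i ≠ j → 0 ≤ σ i j)
    (hA : ∀ x i, (A *ᵥ x) i = ∑ k, σ i k * (x k - x i)) {x : ι → R} {i : ι}
    (hmax : ∀ k, x k ≤ x i) : (A *ᵥ x) i ≤ 0 :=
  hA x i ▸ sum_nonpos fun k _ => mul_sub_nonpos_of_isMax hσ hmax k

theorem mulVec_apply_nonneg_of_isMin (hσ : ∀ i j, i ≠ j → 0 ≤ σ i j)
    (hA : ∀ x i, (A *ᵥ x) i = ∑ k, σ i k * (x k - x i)) {x : ι → R} {i : ι}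
    (hmin : ∀ k, x i ≤ x k) : 0 ≤ (A *ᵥ x) i := by
  simpa [mulVec_neg] using mulVec_apply_nonpos_of_isMax hσ hA (x := -x) (by simpa using hmin)

theorem eq_of_mulVec_apply_eq_zero_of_isMax (hσ : ∀ i j, i ≠ j → 0 ≤ σ i j)
    (hA : ∀ x i, (A *ᵥ x) i = ∑ k, σ i k * (x k - x i)) {x : ι → R} {i j : ι}
    (hx : (A *ᵥ x) i = 0) (hmax : ∀ k, x k ≤ x i) (hij : 0 < σ i j) : x j = x i := by
  rw [hA] at hx
  have hterm := (sum_eq_zero_iff_of_nonpos fun k _ => mul_sub_nonpos_of_isMax hσ hmax k).1 hx j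
    (mem_univ j)
  exact sub_eq_zero.1 ((mul_eq_zero.1 hterm).resolve_left hij.ne')

theorem eq_of_mulVec_eq_zero (hσ : ∀ i j, i ≠ j → 0 ≤ σ i j)
    (hA : ∀ x i, (A *ᵥ x) i = ∑ k, σ i k * (x k - x i))
    (hconn : ∀ i j, i ≠ j → Relation.TransGen (fun a b => 0 < σ a b) i j) {x : ι → R}
    (hx : A *ᵥ x = 0) (i j : ι) : x i = x j := by
  have : Nonempty ι := ⟨i⟩
  obtain ⟨m, hm⟩ := Finite.exists_max x
  have hreach : ∀ k, Relation.TransGen (fun a b => 0 < σ a b) m k → x k = x m := by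
    intro k hk
    induction hk with
    | single hmk => exact eq_of_mulVec_apply_eq_zero_of_isMax hσ hA (congrFun hx m) hm hmk
    | tail _ hab ih =>
      exact (eq_of_mulVec_apply_eq_zero_of_isMax hσ hA (congrFun hx _) (ih ▸ hm) hab).trans ih
  have hall : ∀ k, x k = x m := fun k =>
    (eq_or_ne m k).elim (fun h => h ▸ rfl) fun h => hreach k (hconn m k h)
  rw [hall i, hall j]

theorem ker_mulVecLin_eq_span_one (hσ : ∀ i j, i ≠ j → 0 ≤ σ i j)
    (hA : ∀ x i, (A *ᵥ x) i = ∑ k, σ i k * (x k - x i))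
    (hconn : ∀ i j, i ≠ j → Relation.TransGen (fun a b => 0 < σ a b) i j) :
    LinearMap.ker A.mulVecLin = Submodule.span R {1} := by
  ext x
  rw [LinearMap.mem_ker, mulVecLin_apply, Submodule.mem_span_singleton]
  constructor
  · intro hx
    rcases isEmpty_or_nonempty ι with hι | ⟨⟨i⟩⟩
    · exact ⟨0, Subsingleton.elim _ _⟩
    · exact ⟨x i, funext fun j => by simp [eq_of_mulVec_eq_zero hσ hA hconn hx i j]⟩
  · rintro ⟨c, rfl⟩
    ext i
    simp [hA]

theorem mulVec_eq_zero_of_mulVec_mulVec_eq_zero (hσ : ∀ i j, i ≠ j → 0 ≤ σ i j)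
    (hA : ∀ x i, (A *ᵥ x) i = ∑ k, σ i k * (x k - x i))
    (hconn : ∀ i j, i ≠ j → Relation.TransGen (fun a b => 0 < σ a b) i j) {x : ι → R}
    (hx : A *ᵥ (A *ᵥ x) = 0) : A *ᵥ x = 0 := by
  ext k
  have : Nonempty ι := ⟨k⟩
  obtain ⟨i, hi⟩ := Finite.exists_max x
  obtain ⟨j, hj⟩ := Finite.exists_min x
  have hconst := eq_of_mulVec_eq_zero hσ hA hconn hx
  exact le_antisymm (hconst k i ▸ mulVec_apply_nonpos_of_isMax hσ hA hi)
    (hconst k j ▸ mulVec_apply_nonneg_of_isMin hσ hA hj)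

theorem finrank_ker_mulVecLin_eq_one [Nonempty ι] (hσ : ∀ i j, i ≠ j → 0 ≤ σ i j)
    (hA : ∀ x i, (A *ᵥ x) i = ∑ k, σ i k * (x k - x i))
    (hconn : ∀ i j, i ≠ j → Relation.TransGen (fun a b => 0 < σ a b) i j) :
    Module.finrank R (LinearMap.ker A.mulVecLin) = 1 := by
  rw [ker_mulVecLin_eq_span_one hσ hA hconn, finrank_span_singleton one_ne_zero]

end RateMatrix

theorem zero_simple_eigenvalue (N : ℕ) (hN : 0 < N) (σ A : Matrix (Fin N) (Fin N) ℝ)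
    (hσ : ∀ i j, i ≠ j → 0 ≤ σ i j)
    (hoff : ∀ i j, i ≠ j → A i j = σ i j)
    (hdiag : ∀ i, A i i = -∑ k ∈ Finset.univ.filter (fun k => k ≠ i), σ i k)
    (hconn : ∀ i j : Fin N, i ≠ j → Relation.TransGen (fun a b => 0 < σ a b) i j) :
    Polynomial.rootMultiplicity 0 A.charpoly = 1 ∧
    Module.finrank ℝ (LinearMap.ker (Matrix.mulVecLin Aᵀ)) = 1 := by
  have : Nonempty (Fin N) := ⟨⟨0, hN⟩⟩
  have hA := mulVec_apply_eq_sum_mul_sub hoff hdiag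
  have hker := finrank_ker_mulVecLin_eq_one hσ hA hconn
  refine ⟨?_, (finrank_ker_mulVecLin_transpose A).trans hker⟩
  rw [rootMultiplicity_zero_charpoly_eq_finrank_ker A
    fun _ => mulVec_eq_zero_of_mulVec_mulVec_eq_zero hσ hA hconn, hker]
end

section
/- If the directed graph associated to σ is strongly connected, then there exists a unique v ∈ ℝ^N with A^T v = 0, v_i > 0 for all i, and ∑_i v_i = 1. -/
open Matrix Finset

section Aux
variable {N : ℕ} {σ A : Matrix (Fin N) (Fin N) ℝ}

lemma comp_formula (w : Fin N → ℝ) (j : Fin N) :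
    Aᵀ.mulVec w j = A j j * w j + ∑ i ∈ Finset.univ.erase j, A i j * w i := by
  rw [show Aᵀ.mulVec w j = ∑ i, A i j * w i by
    simp [Matrix.mulVec, dotProduct, Matrix.transpose_apply]]
  exact (Finset.add_sum_erase _ _ (mem_univ j)).symm

lemma rowsum (hoff : ∀ i j, i ≠ j → A i j = σ i j)
    (hdiag : ∀ i, A i i = -∑ k ∈ Finset.univ.filter (fun k => k ≠ i), σ i k)
    (i : Fin N) : ∑ j, A i j = 0 := by
  rw [← Finset.add_sum_erase _ _ (mem_univ i), hdiag i, Finset.filter_ne']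
  have : ∑ j ∈ Finset.univ.erase i, A i j = ∑ j ∈ Finset.univ.erase i, σ i j :=
    Finset.sum_congr rfl fun j hj => hoff i j (Finset.ne_of_mem_erase hj).symm
  rw [this]; ring

lemma diag_nonpos (hσ : ∀ i j, i ≠ j → 0 ≤ σ i j)
    (hdiag : ∀ i, A i i = -∑ k ∈ Finset.univ.filter (fun k => k ≠ i), σ i k)
    (j : Fin N) : A j j ≤ 0 := by
  rw [hdiag j, neg_nonpos]
  exact Finset.sum_nonneg fun k hk => hσ j k (Finset.mem_filter.mp hk).2.symm

/-- zero propagation: nonneg kernel vector with a zero entry is zero -/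
lemma prop_zero (hσ : ∀ i j, i ≠ j → 0 ≤ σ i j)
    (hoff : ∀ i j, i ≠ j → A i j = σ i j)
    (hconn : ∀ i j : Fin N, i ≠ j → Relation.TransGen (fun a b => 0 < σ a b) i j)
    (w : Fin N → ℝ) (hw : Aᵀ.mulVec w = 0) (hnn : ∀ i, 0 ≤ w i)
    (j : Fin N) (hj : w j = 0) : ∀ i, w i = 0 := by
  have step : ∀ b : Fin N, w b = 0 → ∀ a : Fin N, 0 < σ a b → w a = 0 := by
    intro b hb a hab
    by_cases hab' : a = b
    · rw [hab']; exact hb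
    have h0 : Aᵀ.mulVec w b = 0 := by rw [hw]; rfl
    rw [comp_formula, hb, mul_zero, zero_add] at h0
    have hterms : ∀ i ∈ Finset.univ.erase b, 0 ≤ A i b * w i := by
      intro i hi
      have hne := Finset.ne_of_mem_erase hi
      rw [hoff i b hne]
      exact mul_nonneg (hσ i b hne) (hnn i)
    have := (Finset.sum_eq_zero_iff_of_nonneg hterms).mp h0 a (Finset.mem_erase.mpr ⟨hab', mem_univ a⟩)
    rw [hoff a b hab'] at this
    rcases mul_eq_zero.mp this with h | h
    · exact absurd h (ne_of_gt hab)
    · exact h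
  have aux : ∀ a b : Fin N, Relation.TransGen (fun a b => 0 < σ a b) a b → w b = 0 → w a = 0 := by
    intro a b h
    induction h with
    | single h => exact fun hz => step _ hz _ h
    | tail _ h2 ih => exact fun hz => ih (step _ hz _ h2)
  intro i
  by_cases hij : i = j
  · rw [hij]; exact hj
  · exact aux i j (hconn i j hij) hj

/-- absolute value of a kernel vector is in the kernel -/
lemma abs_in_ker (hσ : ∀ i j, i ≠ j → 0 ≤ σ i j)
    (hoff : ∀ i j, i ≠ j → A i j = σ i j)
    (hdiag : ∀ i, A i i = -∑ k ∈ Finset.univ.filter (fun k => k ≠ i), σ i k)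
    (v : Fin N → ℝ) (hv : Aᵀ.mulVec v = 0) :
    Aᵀ.mulVec (fun i => |v i|) = 0 := by
  set u : Fin N → ℝ := fun i => |v i| with hu
  have hsum : ∑ j, Aᵀ.mulVec u j = 0 := by
    calc ∑ j, Aᵀ.mulVec u j = ∑ j, ∑ i, A i j * u i := by
          simp [Matrix.mulVec, dotProduct, Matrix.transpose_apply]
      _ = ∑ i, ∑ j, A i j * u i := Finset.sum_comm
      _ = ∑ i, (∑ j, A i j) * u i := by simp [Finset.sum_mul]
      _ = 0 := by simp [rowsum hoff hdiag]
  have hnn : ∀ j, 0 ≤ Aᵀ.mulVec u j := by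
    intro j
    have h0 : A j j * v j + ∑ i ∈ Finset.univ.erase j, A i j * v i = 0 := by
      rw [← comp_formula, hv]; rfl
    have h1 : ∑ i ∈ Finset.univ.erase j, A i j * v i = -(A j j) * v j := by linarith
    have hAjj : A j j ≤ 0 := diag_nonpos hσ hdiag j
    have h2 : ∑ i ∈ Finset.univ.erase j, A i j * u i
        = ∑ i ∈ Finset.univ.erase j, |A i j * v i| := by
      refine Finset.sum_congr rfl fun i hi => ?_
      have hne := Finset.ne_of_mem_erase hi
      rw [abs_mul, abs_of_nonneg (by rw [hoff i j hne]; exact hσ i j hne)]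
    have h3 : |∑ i ∈ Finset.univ.erase j, A i j * v i|
        ≤ ∑ i ∈ Finset.univ.erase j, |A i j * v i| := Finset.abs_sum_le_sum_abs _ _
    rw [h1, abs_mul, abs_of_nonneg (by linarith : (0:ℝ) ≤ -(A j j))] at h3
    rw [comp_formula, h2]
    have : -(A j j) * |v j| ≤ ∑ i ∈ Finset.univ.erase j, |A i j * v i| := h3
    have huj : u j = |v j| := rfl
    rw [huj]
    nlinarith [abs_nonneg (v j)]
  funext j
  have := (Finset.sum_eq_zero_iff_of_nonneg (fun j _ => hnn j)).mp hsum j (mem_univ j)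
  simp only [Pi.zero_apply]
  exact le_antisymm (le_of_eq this) (hnn j)

end Aux

theorem exists_unique_positive_weight (N : ℕ) (hN : 0 < N)
    (σ A : Matrix (Fin N) (Fin N) ℝ)
    (hσ : ∀ i j, i ≠ j → 0 ≤ σ i j)
    (hoff : ∀ i j, i ≠ j → A i j = σ i j)
    (hdiag : ∀ i, A i i = -∑ k ∈ Finset.univ.filter (fun k => k ≠ i), σ i k)
    (hconn : ∀ i j : Fin N, i ≠ j → Relation.TransGen (fun a b => 0 < σ a b) i j) :
    ∃! v : Fin N → ℝ, Aᵀ.mulVec v = 0 ∧ (∀ i, 0 < v i) ∧ ∑ i, v i = 1 := by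
  have : NeZero N := ⟨hN.ne'⟩
  -- kernel of Aᵀ is nontrivial
  have hones : A.mulVec (fun _ => (1:ℝ)) = 0 := by
    funext i
    simp [Matrix.mulVec, dotProduct]
    exact rowsum hoff hdiag i
  have hdet : Aᵀ.det = 0 := by
    rw [Matrix.det_transpose]
    rw [← Matrix.exists_mulVec_eq_zero_iff]
    refine ⟨fun _ => 1, ?_, hones⟩
    intro h
    have := congrFun h ⟨0, hN⟩
    exact one_ne_zero this
  obtain ⟨v, hv0, hv⟩ := Matrix.exists_mulVec_eq_zero_iff.mpr hdet
  -- the positive normalized kernel vector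
  set u : Fin N → ℝ := fun i => |v i| with hu
  have hku : Aᵀ.mulVec u = 0 := abs_in_ker hσ hoff hdiag v hv
  have hupos : ∀ i, 0 < u i := by
    by_contra h
    push_neg at h
    obtain ⟨j, hj⟩ := h
    have hj0 : u j = 0 := le_antisymm hj (abs_nonneg _)
    have := prop_zero hσ hoff hconn u hku (fun i => abs_nonneg _) j hj0
    exact hv0 (funext fun i => abs_eq_zero.mp (this i))
  have hSpos : 0 < ∑ i, u i :=
    Finset.sum_pos (fun i _ => hupos i) (univ_nonempty)
  set S := ∑ i, u i with hS
  refine ⟨fun i => S⁻¹ * u i, ⟨?_, fun i => mul_pos (inv_pos.mpr hSpos) (hupos i), ?_⟩, ?_⟩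
  · have : (fun i => S⁻¹ * u i) = S⁻¹ • u := rfl
    rw [this, Matrix.mulVec_smul, hku, smul_zero]
  · rw [← Finset.mul_sum, ← hS, inv_mul_cancel₀ hSpos.ne']
  · -- uniqueness
    rintro y ⟨hy1, hy2, hy3⟩
    set w : Fin N → ℝ := fun i => S⁻¹ * u i with hwdef
    have hw1 : Aᵀ.mulVec w = 0 := by
      have : w = S⁻¹ • u := rfl
      rw [this, Matrix.mulVec_smul, hku, smul_zero]
    have hw2 : ∀ i, 0 < w i := fun i => mul_pos (inv_pos.mpr hSpos) (hupos i)
    have hw3 : ∑ i, w i = 1 := by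
      rw [hwdef]; rw [← Finset.mul_sum, ← hS, inv_mul_cancel₀ hSpos.ne']
    obtain ⟨i₀, _, hmin⟩ := Finset.exists_min_image Finset.univ (fun i => y i / w i) univ_nonempty
    set t := y i₀ / w i₀ with ht
    have hle : ∀ i, t * w i ≤ y i := by
      intro i
      have h := hmin i (mem_univ i)
      calc t * w i ≤ (y i / w i) * w i := by
            exact mul_le_mul_of_nonneg_right h (hw2 i).le
        _ = y i := div_mul_cancel₀ _ (hw2 i).ne'
    set z : Fin N → ℝ := fun i => y i - t * w i with hz
    have hzker : Aᵀ.mulVec z = 0 := by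
      have : z = y - t • w := rfl
      rw [this, Matrix.mulVec_sub, Matrix.mulVec_smul, hy1, hw1, smul_zero, sub_zero]
    have hzi₀ : z i₀ = 0 := by
      simp only [hz, ht]
      rw [div_mul_cancel₀ _ (hw2 i₀).ne', sub_self]
    have hzz := prop_zero hσ hoff hconn z hzker (fun i => sub_nonneg.mpr (hle i)) i₀ hzi₀
    have hyt : ∀ i, y i = t * w i := fun i => by
      have := hzz i; simp only [hz] at this; linarith
    have ht1 : t = 1 := by
      have : ∑ i, y i = t * ∑ i, w i := by
        rw [Finset.mul_sum]; exact Finset.sum_congr rfl fun i _ => hyt i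
      rw [hy3, hw3, mul_one] at this
      exact this.symm
    funext i
    rw [hyt i, ht1, one_mul]
end

section
/- Q(y) = Re⟨y, Ay⟩_v ≤ 0 for every y ∈ ℂ^N, and if the graph of σ is strongly connected then Q(y) = 0 if and only if y is a scalar multiple of e = (1,...,1)^T. -/
open Matrix Finset

theorem quadratic_form_nonpos_and_kernel (N : ℕ) (σ A : Matrix (Fin N) (Fin N) ℝ)
    (hσ : ∀ i j, i ≠ j → 0 ≤ σ i j)
    (hoff : ∀ i j, i ≠ j → A i j = σ i j)
    (hdiag : ∀ i, A i i = -∑ k ∈ Finset.univ.filter (fun k => k ≠ i), σ i k)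
    (v : Fin N → ℝ) (hvpos : ∀ i, 0 < v i) (hv : Aᵀ.mulVec v = 0)
    (hconn : ∀ i j : Fin N, i ≠ j → Relation.TransGen (fun a b => 0 < σ a b) i j) :
    (∀ y : Fin N → ℂ,
      (∑ i, (v i : ℂ) * (starRingEnd ℂ) (y i) * ((A.map Complex.ofReal).mulVec y) i).re ≤ 0) ∧
    (∀ y : Fin N → ℂ,
      (∑ i, (v i : ℂ) * (starRingEnd ℂ) (y i) * ((A.map Complex.ofReal).mulVec y) i).re = 0
        ↔ ∃ c : ℂ, y = fun _ => c) := by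
  have split : ∀ (f : Fin N → ℝ) (i : Fin N),
      (∑ j, f j) = f i + ∑ j ∈ Finset.univ.filter (fun j => j ≠ i), f j := by
    intro f i
    rw [Finset.filter_ne']
    exact (Finset.add_sum_erase _ f (Finset.mem_univ i)).symm
  have key : ∀ y : Fin N → ℂ,
      (∑ i, (v i : ℂ) * (starRingEnd ℂ) (y i) * ((A.map Complex.ofReal).mulVec y) i).re
        = -(1/2) * ∑ i, ∑ j ∈ Finset.univ.filter (fun j => j ≠ i),
            v i * σ i j * Complex.normSq (y j - y i) := by
    intro y
    set r : Fin N → Fin N → ℝ := fun i j => ((starRingEnd ℂ) (y i) * y j).re with hr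
    set n : Fin N → ℝ := fun i => Complex.normSq (y i) with hn
    have h1 : (∑ i, (v i : ℂ) * (starRingEnd ℂ) (y i) * ((A.map Complex.ofReal).mulVec y) i).re
        = ∑ i, ∑ j, v i * A i j * r i j := by
      rw [Complex.re_sum]
      refine Finset.sum_congr rfl fun i _ => ?_
      rw [Matrix.mulVec, dotProduct]
      rw [Finset.mul_sum, Complex.re_sum]
      refine Finset.sum_congr rfl fun j _ => ?_
      have e : (v i : ℂ) * (starRingEnd ℂ) (y i) * ((A.map Complex.ofReal) i j * y j)
          = ((v i * A i j : ℝ) : ℂ) * ((starRingEnd ℂ) (y i) * y j) := by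
        simp only [Matrix.map_apply]; push_cast; ring
      rw [e, Complex.re_ofReal_mul]
    set Sr : ℝ := ∑ i, ∑ j ∈ Finset.univ.filter (fun j => j ≠ i), v i * σ i j * r i j with hSr
    set Si : ℝ := ∑ i, ∑ j ∈ Finset.univ.filter (fun j => j ≠ i), v i * σ i j * n i with hSi
    set Sj : ℝ := ∑ i, ∑ j ∈ Finset.univ.filter (fun j => j ≠ i), v i * σ i j * n j with hSj
    have hrii : ∀ i, r i i = n i := by
      intro i
      simp only [hr, hn]
      rw [mul_comm, Complex.mul_conj]
      simp
    have h2 : (∑ i, ∑ j, v i * A i j * r i j) = Sr - Si := by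
      rw [hSr, hSi, ← Finset.sum_sub_distrib]
      refine Finset.sum_congr rfl fun i _ => ?_
      rw [split (fun j => v i * A i j * r i j) i, hdiag i, hrii i]
      have hA : ∀ j ∈ Finset.univ.filter (fun j => j ≠ i),
          v i * A i j * r i j = v i * σ i j * r i j := by
        intro j hj
        rw [hoff i j (Ne.symm (Finset.mem_filter.mp hj).2)]
      rw [Finset.sum_congr rfl hA]
      have e2 : (v i * -∑ k ∈ Finset.univ.filter (fun k => k ≠ i), σ i k) * n i
          = -∑ k ∈ Finset.univ.filter (fun k => k ≠ i), v i * σ i k * n i := by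
        rw [mul_neg, neg_mul, neg_inj, Finset.mul_sum, Finset.sum_mul]
      rw [e2]
      ring
    have hswap : ∀ f : Fin N → Fin N → ℝ,
        (∑ i, ∑ j ∈ Finset.univ.filter (fun j => j ≠ i), f i j)
        = ∑ j, ∑ i ∈ Finset.univ.filter (fun i => i ≠ j), f i j := by
      intro f
      rw [Finset.sum_comm']
      intro i j
      simp [ne_comm]
    have hvc : ∀ j, ∑ i ∈ Finset.univ.filter (fun i => i ≠ j), σ i j * v i = - (A j j * v j) := by
      intro j
      have h0 : (Aᵀ.mulVec v) j = 0 := by rw [hv]; rfl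
      rw [Matrix.mulVec, dotProduct] at h0
      rw [split (fun i => Aᵀ j i * v i) j] at h0
      have e : ∀ i ∈ Finset.univ.filter (fun i => i ≠ j), Aᵀ j i * v i = σ i j * v i := by
        intro i hi
        rw [Matrix.transpose_apply, hoff i j (by simpa using (Finset.mem_filter.mp hi).2)]
      rw [Finset.sum_congr rfl e, Matrix.transpose_apply] at h0
      linarith
    have hC : Sj = Si := by
      rw [hSj, hswap]
      refine Finset.sum_congr rfl fun j _ => ?_
      have e1 : (∑ i ∈ Finset.univ.filter (fun i => i ≠ j), v i * σ i j * n j)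
          = (∑ i ∈ Finset.univ.filter (fun i => i ≠ j), σ i j * v i) * n j := by
        rw [Finset.sum_mul]; exact Finset.sum_congr rfl fun i _ => by ring
      rw [e1, hvc j, hdiag j]
      simp only [neg_mul, neg_neg]
      rw [Finset.sum_mul, Finset.sum_mul]
      exact Finset.sum_congr rfl fun k _ => by ring
    have h3 : (∑ i, ∑ j ∈ Finset.univ.filter (fun j => j ≠ i),
        v i * σ i j * Complex.normSq (y j - y i)) = Sj + Si - 2 * Sr := by
      have e : ∀ i j, Complex.normSq (y j - y i) = n j + n i - 2 * r i j := by
        intro i j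
        rw [Complex.normSq_sub]
        have : (y j * (starRingEnd ℂ) (y i)).re = r i j := by rw [mul_comm]
        rw [this]
      simp only [e]
      rw [hSj, hSi, hSr, Finset.mul_sum, ← Finset.sum_add_distrib, ← Finset.sum_sub_distrib]
      refine Finset.sum_congr rfl fun i _ => ?_
      rw [Finset.mul_sum, ← Finset.sum_add_distrib, ← Finset.sum_sub_distrib]
      exact Finset.sum_congr rfl fun j _ => by ring
    rw [h1, h2, h3]
    linarith [hC]
  have nonneg : ∀ y : Fin N → ℂ, ∀ i ∈ (Finset.univ : Finset (Fin N)),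
      0 ≤ ∑ j ∈ Finset.univ.filter (fun j => j ≠ i), v i * σ i j * Complex.normSq (y j - y i) := by
    intro y i _
    refine Finset.sum_nonneg fun j hj => ?_
    have hji : j ≠ i := (Finset.mem_filter.mp hj).2
    exact mul_nonneg (mul_nonneg (hvpos i).le (hσ i j (Ne.symm hji))) (Complex.normSq_nonneg _)
  constructor
  · intro y
    rw [key y]
    have := Finset.sum_nonneg (nonneg y)
    nlinarith
  · intro y
    constructor
    · intro h0
      rw [key y] at h0
      have hsum : (∑ i, ∑ j ∈ Finset.univ.filter (fun j => j ≠ i),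
          v i * σ i j * Complex.normSq (y j - y i)) = 0 := by linarith
      have hzero : ∀ i ∈ (Finset.univ : Finset (Fin N)),
          (∑ j ∈ Finset.univ.filter (fun j => j ≠ i),
            v i * σ i j * Complex.normSq (y j - y i)) = 0 :=
        (Finset.sum_eq_zero_iff_of_nonneg (nonneg y)).mp hsum
      have hedge : ∀ a b : Fin N, 0 < σ a b → y a = y b := by
        intro a b hab
        by_cases hba : b = a
        · rw [hba]
        · have hinner := hzero a (Finset.mem_univ a)
          have hterm : ∀ j ∈ Finset.univ.filter (fun j => j ≠ a),
              0 ≤ v a * σ a j * Complex.normSq (y j - y a) := by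
            intro j hj
            exact mul_nonneg (mul_nonneg (hvpos a).le
              (hσ a j (Ne.symm (Finset.mem_filter.mp hj).2))) (Complex.normSq_nonneg _)
          have hb : v a * σ a b * Complex.normSq (y b - y a) = 0 :=
            (Finset.sum_eq_zero_iff_of_nonneg hterm).mp hinner b
              (Finset.mem_filter.mpr ⟨Finset.mem_univ b, hba⟩)
          have hpos : 0 < v a * σ a b := mul_pos (hvpos a) hab
          have : Complex.normSq (y b - y a) = 0 :=
            (mul_eq_zero.mp hb).resolve_left hpos.ne'
          have := Complex.normSq_eq_zero.mp this
          have := sub_eq_zero.mp this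
          exact this.symm
      rcases Nat.eq_zero_or_pos N with hN | hN
      · subst hN
        exact ⟨0, funext fun i => i.elim0⟩
      · set i0 : Fin N := ⟨0, hN⟩
        have hall : ∀ b, Relation.TransGen (fun a b => 0 < σ a b) i0 b → y b = y i0 := by
          intro b htg
          induction htg with
          | single h => exact (hedge _ _ h).symm
          | tail _ h ih => exact (hedge _ _ h).symm.trans ih
        refine ⟨y i0, funext fun j => ?_⟩
        by_cases hj : j = i0
        · rw [hj]
        · exact hall j (hconn i0 j (fun h => hj (by rw [h])))
    · rintro ⟨c, rfl⟩
      rw [key]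
      simp
end

section
/- If the graph of σ is strongly connected, the weighted variance V_v(t) = ∑_i v_i (y_i(t) - m)², with m = ∑_i v_i y_i(0), is nonincreasing along any solution of y' = Ay, and strictly decreasing as long as y(t) is not a multiple of e. -/
open Matrix Finset

/-! With `v ᵥ* A = 0` and zero row sums, `2 ∑ᵢ vᵢ xᵢ (A x)ᵢ = -∑ᵢⱼ vᵢ Aᵢⱼ (xⱼ - xᵢ)²`, so along a
solution the weighted variance decreases at the rate of this Dirichlet form, which is nonnegative,
while the weighted mean `v ⬝ᵥ y` is conserved. If `V` took equal values at `t < s`, Rolle's theorem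
would give `u` between them at which the Dirichlet form of `y u` vanishes; then `y u` agrees across
every edge, so by strong connectivity it is constant, equal to the conserved mean `m`. Hence
`V u = 0`, so `V t = 0` by monotonicity, i.e. `y t` is the constant vector `m`. -/

section DirichletForm

variable {ι R : Type*} [CommRing R]

theorem dirichletForm_summand_nonneg [LinearOrder R] [IsStrictOrderedRing R]
    {A : Matrix ι ι R} {v : ι → R} (hA : ∀ i j, i ≠ j → 0 ≤ A i j) (hv : ∀ i, 0 ≤ v i)
    (x : ι → R) (i j : ι) : 0 ≤ v i * A i j * (x j - x i) ^ 2 := by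
  obtain rfl | hij := eq_or_ne i j
  · simp
  · exact mul_nonneg (mul_nonneg (hv i) (hA i j hij)) (sq_nonneg _)

variable [Fintype ι]

def dirichletForm (A : Matrix ι ι R) (v x : ι → R) : R :=
  ∑ i, ∑ j, v i * A i j * (x j - x i) ^ 2

theorem dirichletForm_eq_neg_two_mul {A : Matrix ι ι R} {v : ι → R}
    (hrow : ∀ i, ∑ j, A i j = 0) (hv : v ᵥ* A = 0) (x : ι → R) :
    dirichletForm A v x = -2 * ∑ i, v i * x i * (A *ᵥ x) i := by
  have hcol : ∑ i, ∑ j, v i * A i j * x j ^ 2 = 0 := by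
    rw [sum_comm]
    refine sum_eq_zero fun j _ => ?_
    rw [← sum_mul, ← mul_zero (x j ^ 2), mul_comm]
    exact congrArg _ (congrFun hv j)
  have hrow' : ∑ i, ∑ j, v i * A i j * x i ^ 2 = 0 :=
    sum_eq_zero fun i _ => by rw [← sum_mul, ← mul_sum, hrow, mul_zero, zero_mul]
  calc dirichletForm A v x
      = ∑ i, ∑ j, v i * A i j * x j ^ 2 - 2 * ∑ i, v i * x i * ∑ j, A i j * x j
          + ∑ i, ∑ j, v i * A i j * x i ^ 2 := by
        simp only [dirichletForm, mul_sum, ← sum_sub_distrib, ← sum_add_distrib]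
        exact sum_congr rfl fun i _ => sum_congr rfl fun j _ => by ring
    _ = -2 * ∑ i, v i * x i * (A *ᵥ x) i := by
        rw [hcol, hrow']
        simp only [mulVec, dotProduct]
        ring

variable [LinearOrder R] [IsStrictOrderedRing R] {A : Matrix ι ι R} {v : ι → R}

theorem dirichletForm_nonneg (hA : ∀ i j, i ≠ j → 0 ≤ A i j) (hv : ∀ i, 0 ≤ v i)
    (x : ι → R) : 0 ≤ dirichletForm A v x :=
  sum_nonneg fun i _ => sum_nonneg fun j _ => dirichletForm_summand_nonneg hA hv x i j

theorem eq_of_dirichletForm_eq_zero (hA : ∀ i j, i ≠ j → 0 ≤ A i j) (hv : ∀ i, 0 ≤ v i)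
    {x : ι → R} (hx : dirichletForm A v x = 0) {i j : ι} (hvi : 0 < v i) (hij : 0 < A i j) :
    x i = x j := by
  have hterm : v i * A i j * (x j - x i) ^ 2 = 0 := by
    have hsum_i := (sum_eq_zero_iff_of_nonneg fun i _ => sum_nonneg fun j _ =>
      dirichletForm_summand_nonneg hA hv x i j).1 hx i (mem_univ i)
    exact (sum_eq_zero_iff_of_nonneg fun j _ =>
      dirichletForm_summand_nonneg hA hv x i j).1 hsum_i j (mem_univ j)
  have hsq := (mul_eq_zero.1 hterm).resolve_left (mul_pos hvi hij).ne'
  exact (sub_eq_zero.1 (pow_eq_zero_iff two_ne_zero |>.1 hsq)).symm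

theorem eq_of_dirichletForm_eq_zero_of_transGen (hA : ∀ i j, i ≠ j → 0 ≤ A i j)
    (hv : ∀ i, 0 < v i) {r : ι → ι → Prop} (hr : ∀ a b, r a b → a ≠ b → 0 < A a b)
    {x : ι → R} (hx : dirichletForm A v x = 0) {i j : ι} (hij : Relation.TransGen r i j) :
    x i = x j := by
  refine Relation.transGen_eq_self.le _ _ (hij.lift x fun a b hab => ?_)
  obtain rfl | hne := eq_or_ne a b
  · rfl
  · exact eq_of_dirichletForm_eq_zero hA (fun i => (hv i).le) hx (hv a) (hr a b hab hne)

theorem sum_mul_sq_sub_eq_zero_iff (hv : ∀ i, 0 < v i) {x : ι → R} {c : R} :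
    ∑ i, v i * (x i - c) ^ 2 = 0 ↔ ∀ i, x i = c := by
  rw [sum_eq_zero_iff_of_nonneg fun i _ => mul_nonneg (hv i).le (sq_nonneg _)]
  simp [(hv _).ne', sub_eq_zero]

end DirichletForm

theorem eq_dotProduct_of_forall_eq {ι R : Type*} [Fintype ι] [CommSemiring R] {v x : ι → R}
    (hv : ∑ i, v i = 1) (hx : ∀ i j, x i = x j) (i : ι) : x i = v ⬝ᵥ x := by
  simp only [dotProduct, hx _ i, ← sum_mul, hv, one_mul]

theorem sum_apply_eq_zero_of_diag_eq_neg_sum {ι R : Type*} [Fintype ι] [DecidableEq ι]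
    [AddCommGroup R] {σ A : Matrix ι ι R} (hoff : ∀ i j, i ≠ j → A i j = σ i j)
    (hdiag : ∀ i, A i i = -∑ k ∈ univ.filter (fun k => k ≠ i), σ i k) (i : ι) :
    ∑ j, A i j = 0 := by
  rw [← add_sum_erase univ _ (mem_univ i), hdiag, filter_ne',
    sum_congr rfl fun j hj => hoff i j (ne_of_mem_erase hj).symm, neg_add_cancel]

section LinearFlow

variable {ι : Type*} [Fintype ι] {A : Matrix ι ι ℝ} {v : ι → ℝ} {y : ℝ → ι → ℝ}

theorem dotProduct_eq_of_vecMul_eq_zero (hv : v ᵥ* A = 0)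
    (hy : ∀ t, HasDerivAt y (A *ᵥ y t) t) (s t : ℝ) : v ⬝ᵥ y s = v ⬝ᵥ y t := by
  have hderiv : ∀ t, HasDerivAt (fun t => v ⬝ᵥ y t) 0 t := fun t => by
    have h := HasDerivAt.fun_sum fun i (_ : i ∈ univ) =>
      (hasDerivAt_pi.1 (hy t) i).const_mul (v i)
    rwa [← dotProduct, dotProduct_mulVec, hv, zero_dotProduct] at h
  exact is_const_of_deriv_eq_zero (fun t => (hderiv t).differentiableAt)
    (fun t => (hderiv t).deriv) s t

theorem hasDerivAt_sum_mul_sq_sub (hrow : ∀ i, ∑ j, A i j = 0) (hv : v ᵥ* A = 0)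
    (hy : ∀ t, HasDerivAt y (A *ᵥ y t) t) (c t : ℝ) :
    HasDerivAt (fun t => ∑ i, v i * (y t i - c) ^ 2) (-dirichletForm A v (y t)) t := by
  refine (HasDerivAt.fun_sum fun i (_ : i ∈ univ) =>
    (((hasDerivAt_pi.1 (hy t) i).sub_const c).pow 2).const_mul (v i)).congr_deriv ?_
  calc _ = 2 * ∑ i, v i * y t i * (A *ᵥ y t) i - 2 * c * (v ⬝ᵥ A *ᵥ y t) := by
        simp only [dotProduct, mul_sum, ← sum_sub_distrib]
        refine sum_congr rfl fun i _ => ?_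
        push_cast
        ring
    _ = -dirichletForm A v (y t) := by
        rw [dotProduct_mulVec, hv, zero_dotProduct, dirichletForm_eq_neg_two_mul hrow hv]
        ring

end LinearFlow

theorem weighted_variance_decreasing (N : ℕ) (σ A : Matrix (Fin N) (Fin N) ℝ)
    (hσ : ∀ i j, i ≠ j → 0 ≤ σ i j)
    (hoff : ∀ i j, i ≠ j → A i j = σ i j)
    (hdiag : ∀ i, A i i = -∑ k ∈ Finset.univ.filter (fun k => k ≠ i), σ i k)
    (hconn : ∀ i j : Fin N, i ≠ j → Relation.TransGen (fun a b => 0 < σ a b) i j)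
    (v : Fin N → ℝ) (hvpos : ∀ i, 0 < v i) (hvsum : ∑ i, v i = 1)
    (hv : Aᵀ.mulVec v = 0)
    (y : ℝ → Fin N → ℝ)
    (hy : ∀ t : ℝ, HasDerivAt y (A.mulVec (y t)) t)
    (m : ℝ) (hm : m = ∑ i, v i * y 0 i)
    (V : ℝ → ℝ) (hV : ∀ t, V t = ∑ i, v i * (y t i - m) ^ 2) :
    (∀ s t : ℝ, s ≤ t → V t ≤ V s) ∧
    (∀ t : ℝ, (¬ ∃ c : ℝ, y t = fun _ => c) → ∀ s : ℝ, t < s → V s < V t) := by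
  have hA : ∀ i j, i ≠ j → 0 ≤ A i j := fun i j hij => hoff i j hij ▸ hσ i j hij
  have hrow := sum_apply_eq_zero_of_diag_eq_neg_sum hoff hdiag
  have hvA : v ᵥ* A = 0 := by rwa [← mulVec_transpose]
  have hderiv : ∀ t, HasDerivAt V (-dirichletForm A v (y t)) t := by
    simpa only [← funext hV] using hasDerivAt_sum_mul_sq_sub hrow hvA hy m
  have hanti : Antitone V := antitone_of_hasDerivAt_nonpos hderiv fun t =>
    neg_nonpos.2 (dirichletForm_nonneg hA (fun i => (hvpos i).le) (y t))
  refine ⟨fun s t hst => hanti hst, fun t hnc s hts => (hanti hts.le).lt_of_ne fun hst => hnc ?_⟩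
  obtain ⟨u, hu, hDu⟩ := exists_hasDerivAt_eq_zero hts
    (HasDerivAt.continuousOn fun u _ => hderiv u) hst.symm fun u _ => hderiv u
  have hflat : ∀ i j, y u i = y u j := fun i j => (eq_or_ne i j).elim (congrArg _) fun hne =>
    eq_of_dirichletForm_eq_zero_of_transGen hA hvpos (fun a b hab hab' => hoff a b hab' ▸ hab)
      (neg_eq_zero.1 hDu) (hconn i j hne)
  have hVu : V u = 0 := by
    rw [hV, sum_mul_sq_sub_eq_zero_iff hvpos, hm]
    exact fun i => (eq_dotProduct_of_forall_eq hvsum hflat i).trans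
      (dotProduct_eq_of_vecMul_eq_zero hvA hy u 0)
  have hVt : V t = 0 := le_antisymm (hVu ▸ hst ▸ hanti hu.2.le) (hVu ▸ hanti hu.1.le)
  rw [hV, sum_mul_sq_sub_eq_zero_iff hvpos] at hVt
  exact ⟨m, funext hVt⟩
end

section
/- The orthogonal complement of ker A with respect to the v-weighted inner product equals the image of A: (ker A)^{⊥_v} = im A. -/
open Matrix Finset

/-- Row sums of A vanish. -/
lemma rowSum_zero (N : ℕ) (σ A : Matrix (Fin N) (Fin N) ℝ)
    (hoff : ∀ i j, i ≠ j → A i j = σ i j)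
    (hdiag : ∀ i, A i i = -∑ k ∈ Finset.univ.filter (fun k => k ≠ i), σ i k)
    (i : Fin N) : ∑ k, A i k = 0 := by
  rw [← Finset.sum_filter_add_sum_filter_not univ (fun k => k ≠ i) (fun k => A i k)]
  have h1 : univ.filter (fun k => ¬ k ≠ i) = {i} := by
    ext k; simp [eq_comm]
  have h2 : ∑ k ∈ univ.filter (fun k => k ≠ i), A i k
      = ∑ k ∈ univ.filter (fun k => k ≠ i), σ i k := by
    apply Finset.sum_congr rfl
    intro k hk
    exact hoff i k (Ne.symm (Finset.mem_filter.mp hk).2)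
  rw [h1, Finset.sum_singleton, hdiag i, h2]
  ring

lemma mulVec_one_eq_zero (N : ℕ) (σ A : Matrix (Fin N) (Fin N) ℝ)
    (hoff : ∀ i j, i ≠ j → A i j = σ i j)
    (hdiag : ∀ i, A i i = -∑ k ∈ Finset.univ.filter (fun k => k ≠ i), σ i k) :
    A.mulVec (fun _ => 1) = 0 := by
  funext i
  show ∑ k, A i k * 1 = 0
  simp only [mul_one]
  exact rowSum_zero N σ A hoff hdiag i

/-- Any kernel vector is constant. -/
lemma ker_const (N : ℕ) (σ A : Matrix (Fin N) (Fin N) ℝ)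
    (hσ : ∀ i j, i ≠ j → 0 ≤ σ i j)
    (hoff : ∀ i j, i ≠ j → A i j = σ i j)
    (hdiag : ∀ i, A i i = -∑ k ∈ Finset.univ.filter (fun k => k ≠ i), σ i k)
    (hconn : ∀ i j : Fin N, i ≠ j → Relation.TransGen (fun a b => 0 < σ a b) i j)
    (u : Fin N → ℝ) (hu : A.mulVec u = 0) (i j : Fin N) : u i = u j := by
  obtain ⟨m, -, hm⟩ := Finset.exists_max_image (univ : Finset (Fin N)) u ⟨i, Finset.mem_univ i⟩
  have step : ∀ a, u a = u m → ∀ b, 0 < σ a b → u b = u m := by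
    intro a ha b hb
    by_cases hab : b = a
    · rw [hab]; exact ha
    have hrow : ∑ k, A a k * u k = 0 := by
      have : (A.mulVec u) a = 0 := by rw [hu]; rfl
      simpa [Matrix.mulVec, dotProduct] using this
    have key : ∑ k ∈ univ.filter (fun k => k ≠ a), σ a k * (u k - u a) = 0 := by
      have hsplit : ∑ k, A a k * u k
          = ∑ k ∈ univ.filter (fun k => k ≠ a), A a k * u k + A a a * u a := by
        rw [← Finset.sum_filter_add_sum_filter_not univ (fun k => k ≠ a)
          (fun k => A a k * u k)]
        congr 1
        have h1 : univ.filter (fun k => ¬ k ≠ a) = {a} := by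
          ext k; simp [eq_comm]
        rw [h1, Finset.sum_singleton]
      have h2 : ∑ k ∈ univ.filter (fun k => k ≠ a), A a k * u k
          = ∑ k ∈ univ.filter (fun k => k ≠ a), σ a k * u k := by
        apply Finset.sum_congr rfl
        intro k hk
        rw [hoff a k (Ne.symm (Finset.mem_filter.mp hk).2)]
      calc ∑ k ∈ univ.filter (fun k => k ≠ a), σ a k * (u k - u a)
          = ∑ k ∈ univ.filter (fun k => k ≠ a), σ a k * u k
            - (∑ k ∈ univ.filter (fun k => k ≠ a), σ a k) * u a := by
            rw [Finset.sum_mul, ← Finset.sum_sub_distrib]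
            apply Finset.sum_congr rfl; intro k _; ring
        _ = ∑ k, A a k * u k := by
            rw [hsplit, h2, hdiag a]; ring
        _ = 0 := hrow
    have hterm : ∀ k ∈ univ.filter (fun k => k ≠ a), σ a k * (u k - u a) = 0 := by
      rw [← Finset.sum_eq_zero_iff_of_nonpos]
      · exact key
      · intro k hk
        have hk' := (Finset.mem_filter.mp hk).2
        have h1 : 0 ≤ σ a k := hσ a k (Ne.symm hk')
        have h2 : u k - u a ≤ 0 := by
          have := hm k (Finset.mem_univ k)
          rw [ha]; linarith
        exact mul_nonpos_of_nonneg_of_nonpos h1 h2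
    have hb0 := hterm b (by simp [hab])
    have : u b - u a = 0 := by
      rcases mul_eq_zero.mp hb0 with h | h
      · exact absurd h hb.ne'
      · exact h
    rw [← ha]; linarith
  have hreach : ∀ j, Relation.TransGen (fun a b => 0 < σ a b) m j → u j = u m := by
    intro j h
    induction h with
    | single hr => exact step m rfl _ hr
    | tail _ hr ih => exact step _ ih _ hr
  have hall : ∀ j, u j = u m := by
    intro j
    by_cases hjm : j = m
    · rw [hjm]
    · exact hreach j (hconn m j (Ne.symm hjm))
  rw [hall i, hall j]

lemma phi_range (N : ℕ) (A : Matrix (Fin N) (Fin N) ℝ) (v : Fin N → ℝ)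
    (hv : Aᵀ.mulVec v = 0) (w : Fin N → ℝ) :
    ∑ i, v i * (A.mulVec w) i = 0 := by
  have h : ∀ k, (Aᵀ.mulVec v) k = 0 := fun k => by rw [hv]; rfl
  calc ∑ i, v i * (A.mulVec w) i
      = ∑ i, ∑ k, v i * (A i k * w k) := by
        simp [Matrix.mulVec, dotProduct, Finset.mul_sum]
    _ = ∑ k, ∑ i, v i * (A i k * w k) := Finset.sum_comm
    _ = ∑ k, (Aᵀ.mulVec v) k * w k := by
        apply Finset.sum_congr rfl
        intro k _
        simp only [Matrix.mulVec, dotProduct, Matrix.transpose_apply,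
          Finset.sum_mul]
        apply Finset.sum_congr rfl; intro i _; ring
    _ = 0 := by simp [h]

theorem v_orthogonal_complement_ker_eq_range (N : ℕ) (σ A : Matrix (Fin N) (Fin N) ℝ)
    (hσ : ∀ i j, i ≠ j → 0 ≤ σ i j)
    (hoff : ∀ i j, i ≠ j → A i j = σ i j)
    (hdiag : ∀ i, A i i = -∑ k ∈ Finset.univ.filter (fun k => k ≠ i), σ i k)
    (hconn : ∀ i j : Fin N, i ≠ j → Relation.TransGen (fun a b => 0 < σ a b) i j)
    (v : Fin N → ℝ) (hvpos : ∀ i, 0 < v i) (hvsum : ∑ i, v i = 1)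
    (hv : Aᵀ.mulVec v = 0) :
    {z : Fin N → ℝ | ∀ u : Fin N → ℝ, A.mulVec u = 0 → ∑ i, v i * z i * u i = 0}
      = {z : Fin N → ℝ | ∃ u : Fin N → ℝ, A.mulVec u = z} := by
  classical
  rcases Nat.eq_zero_or_pos N with hN | hN
  · subst hN
    ext z
    simp only [Set.mem_setOf_eq]
    constructor
    · intro _
      exact ⟨0, by funext i; exact i.elim0⟩
    · intro _ u _
      simp
  · set i₀ : Fin N := ⟨0, hN⟩ with hi₀
    -- linear functional φ
    set φ : (Fin N → ℝ) →ₗ[ℝ] ℝ :=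
      { toFun := fun z => ∑ i, v i * z i
        map_add' := by
          intro x y
          simp [mul_add, Finset.sum_add_distrib]
        map_smul' := by
          intro c x
          simp [Finset.mul_sum, smul_eq_mul]
          apply Finset.sum_congr rfl; intro i _; ring } with hφ
    have hφ1 : φ (fun _ => 1) = 1 := by simp [hφ, hvsum]
    have hφsurj : Function.Surjective φ := by
      intro c
      refine ⟨(c • (fun _ => (1:ℝ)) : Fin N → ℝ), ?_⟩
      rw [_root_.map_smul, hφ1]; simp
    have hker : LinearMap.ker A.mulVecLin
        = Submodule.span ℝ {(fun _ => 1 : Fin N → ℝ)} := by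
      apply le_antisymm
      · intro u hu
        have hu' : A.mulVec u = 0 := hu
        have hconst : u = u i₀ • (fun _ => (1 : ℝ)) := by
          funext j
          have := ker_const N σ A hσ hoff hdiag hconn u hu' j i₀
          simp [this]
        rw [hconst]
        exact Submodule.smul_mem _ _ (Submodule.subset_span rfl)
      · rw [Submodule.span_le, Set.singleton_subset_iff]
        show A.mulVecLin (fun _ => 1) = 0
        simpa [Matrix.mulVecLin] using mulVec_one_eq_zero N σ A hoff hdiag
    have hone_ne : (fun _ => (1 : ℝ)) ≠ (0 : Fin N → ℝ) := by
      intro h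
      have := congrFun h i₀
      simp at this
    have hk1 : Module.finrank ℝ (LinearMap.ker A.mulVecLin) = 1 := by
      rw [hker, finrank_span_singleton hone_ne]
    have hrn : Module.finrank ℝ (LinearMap.range A.mulVecLin)
        + Module.finrank ℝ (LinearMap.ker A.mulVecLin) = N := by
      rw [LinearMap.finrank_range_add_finrank_ker]
      simp
    have hrnφ : Module.finrank ℝ (LinearMap.range φ)
        + Module.finrank ℝ (LinearMap.ker φ) = N := by
      rw [LinearMap.finrank_range_add_finrank_ker]
      simp
    have hrφ : Module.finrank ℝ (LinearMap.range φ) = 1 := by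
      rw [LinearMap.range_eq_top.mpr hφsurj]
      simp
    have hle : LinearMap.range A.mulVecLin ≤ LinearMap.ker φ := by
      rintro x ⟨w, rfl⟩
      show φ (A.mulVecLin w) = 0
      simpa [hφ, Matrix.mulVecLin] using phi_range N A v hv w
    have heq : LinearMap.range A.mulVecLin = LinearMap.ker φ := by
      apply Submodule.eq_of_le_of_finrank_le hle
      omega
    ext z
    simp only [Set.mem_setOf_eq]
    constructor
    · intro hz
      have hφz : φ z = 0 := by
        have h1 := hz (fun _ => 1) (mulVec_one_eq_zero N σ A hoff hdiag)
        simpa [hφ] using h1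
      have : z ∈ LinearMap.range A.mulVecLin := by
        rw [heq]; exact hφz
      obtain ⟨w, hw⟩ := this
      exact ⟨w, hw⟩
    · rintro ⟨w, rfl⟩ u hu
      have hc : ∀ i, u i = u i₀ :=
        fun i => ker_const N σ A hσ hoff hdiag hconn u hu i i₀
      calc ∑ i, v i * (A.mulVec w) i * u i
          = u i₀ * ∑ i, v i * (A.mulVec w) i := by
            rw [Finset.mul_sum]
            apply Finset.sum_congr rfl
            intro i _
            rw [hc i]; ring
        _ = 0 := by rw [phi_range N A v hv w]; ring
end

section
/- If y(0) is a nonnegative function, then the solution y(·,t) of ∂_t y = Ay remains nonnegative almost everywhere for all t ≥ 0; more generally, ess inf y(·,0) ≤ y(x,t) ≤ ess sup y(·,0) for a.e. x and all t ≥ 0. -/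
/-!
Since `σ ≥ 0` and `∫ σ(x, ·) ≤ C`, the shifted operator `A + C` maps nonnegative functions to
nonnegative functions, hence so does every term of the exponential series of `t (A + C)` for
`t ≥ 0`, and `e^{tA} = e^{-tC} e^{t(A + C)}` is positivity preserving, i.e. monotone. Constants
lie in the kernel of `A`, so `e^{tA}` fixes them, and monotonicity carries the bounds
`a ≤ y⁰ ≤ b` over to `e^{tA} y⁰`.
-/

open MeasureTheory NormedSpace

namespace NormedSpace

theorem exp_add_algebraMap {𝔸 : Type*} [NormedRing 𝔸] [NormedAlgebra ℝ 𝔸] [CompleteSpace 𝔸]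
    (a : 𝔸) (c : ℝ) : exp (a + algebraMap ℝ 𝔸 c) = Real.exp c • exp a := by
  have hball (x : 𝔸) : x ∈ Metric.eball (0 : 𝔸) (expSeries ℝ 𝔸).radius :=
    (expSeries_radius_eq_top ℝ 𝔸).symm ▸ edist_lt_top _ _
  rw [exp_add_of_commute_of_mem_ball (𝕂 := ℝ) (Algebra.commute_algebraMap_right c a) (hball a)
    (hball _), ← algebraMap_exp_comm, ← Real.exp_eq_exp_ℝ, ← Algebra.commutes, Algebra.smul_def]

end NormedSpace

namespace ContinuousLinearMap

variable {E : Type*} [NormedAddCommGroup E] [NormedSpace ℝ E] [CompleteSpace E]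

theorem exp_apply_eq_self_of_apply_eq_zero {A : E →L[ℝ] E} {v : E} (hv : A v = 0) :
    exp A v = v := by
  have hterm (n : ℕ) (hn : n ≠ 0) : ((n.factorial⁻¹ : ℝ) • A ^ n) v = 0 := by
    obtain ⟨m, rfl⟩ := Nat.exists_eq_succ_of_ne_zero hn
    rw [smul_apply, pow_succ, mul_apply_eq_comp, hv, map_zero, smul_zero]
  have hsum := (exp_series_hasSum_exp' (𝕂 := ℝ) A).mapL (apply ℝ E v)
  simpa using hsum.unique (hasSum_single 0 hterm)

variable [PartialOrder E] [IsOrderedAddMonoid E] [OrderClosedTopology E] [PosSMulMono ℝ E]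

theorem exp_apply_nonneg {B : E →L[ℝ] E} (hB : ∀ z, 0 ≤ z → 0 ≤ B z) {w : E} (hw : 0 ≤ w) :
    0 ≤ exp B w := by
  have hpow (n : ℕ) : 0 ≤ (B ^ n) w := by
    induction n with
    | zero => simpa using hw
    | succ n ih => rw [pow_succ', mul_apply_eq_comp]; exact hB _ ih
  have hsum := (exp_series_hasSum_exp' (𝕂 := ℝ) B).mapL (apply ℝ E w)
  exact hsum.nonneg fun n => smul_nonneg (by positivity) (hpow n)

theorem exp_smul_apply_nonneg_of_add_smul_one {A : E →L[ℝ] E} {C : ℝ}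
    (hA : ∀ z, 0 ≤ z → 0 ≤ (A + C • 1) z) {t : ℝ} (ht : 0 ≤ t) {w : E} (hw : 0 ≤ w) :
    0 ≤ exp (t • A) w := by
  have hsplit : t • A = t • (A + C • 1) + algebraMap ℝ (E →L[ℝ] E) (-(t * C)) := by
    rw [Algebra.algebraMap_eq_smul_one, smul_add, smul_smul, neg_smul]
    abel
  have hpos : ∀ z, 0 ≤ z → 0 ≤ (t • (A + C • 1)) z := fun z hz => by
    rw [smul_apply]
    exact smul_nonneg ht (hA z hz)
  rw [hsplit, exp_add_algebraMap, smul_apply]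
  exact smul_nonneg (Real.exp_pos _).le (exp_apply_nonneg hpos hw)

theorem exp_smul_apply_mem_Icc {A : E →L[ℝ] E} {C : ℝ}
    (hA : ∀ z, 0 ≤ z → 0 ≤ (A + C • 1) z) {t : ℝ} (ht : 0 ≤ t) {u v w : E}
    (hu : A u = 0) (hv : A v = 0) (hw : w ∈ Set.Icc u v) :
    exp (t • A) w ∈ Set.Icc u v := by
  have hmono : Monotone (exp (t • A) : E →L[ℝ] E) :=
    (monotone_iff_map_nonneg _).2 fun z hz => exp_smul_apply_nonneg_of_add_smul_one hA ht hz
  have hfix {z : E} (hz : A z = 0) : exp (t • A) z = z := by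
    refine exp_apply_eq_self_of_apply_eq_zero ?_
    rw [smul_apply, hz, smul_zero]
  constructor
  · simpa only [hfix hu] using hmono hw.1
  · simpa only [hfix hv] using hmono hw.2

end ContinuousLinearMap

theorem integral_mul_sub_add_mul_nonneg {α : Type*} [MeasurableSpace α] {μ : Measure α}
    [IsProbabilityMeasure μ] {s f : α → ℝ} {C c : ℝ} (hs : AEStronglyMeasurable s μ)
    (hs0 : ∀ᵐ y ∂μ, 0 ≤ s y) (hsC : ∀ᵐ y ∂μ, s y ≤ C) (hf : Integrable f μ)
    (hf0 : ∀ᵐ y ∂μ, 0 ≤ f y) (hc : 0 ≤ c) :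
    0 ≤ ∫ y, s y * (f y - c) ∂μ + C * c := by
  have hs_bound : ∀ᵐ y ∂μ, ‖s y‖ ≤ C := by
    filter_upwards [hs0, hsC] with y h0 hC
    rwa [Real.norm_of_nonneg h0]
  have hs_int : Integrable s μ := .of_bound hs C hs_bound
  have hsf_int : Integrable (fun y => s y * f y) μ := hf.bdd_mul hs hs_bound
  have hsf : 0 ≤ ∫ y, s y * f y ∂μ := by
    refine integral_nonneg_of_ae ?_
    filter_upwards [hs0, hf0] with y h0 hf0 using mul_nonneg h0 hf0
  have hs_le : ∫ y, s y ∂μ ≤ C := by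
    simpa using integral_mono_ae hs_int (integrable_const C) hsC
  have hsplit : ∫ y, s y * (f y - c) ∂μ = ∫ y, s y * f y ∂μ - (∫ y, s y ∂μ) * c := by
    simp_rw [mul_sub]
    rw [integral_sub hsf_int (hs_int.mul_const c), integral_mul_const]
  rw [hsplit]
  linarith [mul_le_mul_of_nonneg_right hs_le hc]

namespace MeasureTheory.Lp

variable {α : Type*} [MeasurableSpace α] {μ : Measure α} {p : ENNReal}

instance : PosSMulMono ℝ (Lp ℝ p μ) where
  smul_le_smul_of_nonneg_left c hc f g hfg := by
    rw [← Lp.coeFn_le] at hfg ⊢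
    filter_upwards [Lp.coeFn_smul c f, Lp.coeFn_smul c g, hfg] with x hf hg hx
    simp only [hf, hg, Pi.smul_apply, smul_eq_mul]
    exact mul_le_mul_of_nonneg_left hx hc

variable [IsFiniteMeasure μ]

theorem const_le_iff {a : ℝ} {f : Lp ℝ p μ} : Lp.const p μ a ≤ f ↔ ∀ᵐ x ∂μ, a ≤ f x := by
  rw [← Lp.coeFn_le]
  exact Filter.eventually_congr ((Lp.coeFn_const p μ a).mono fun x hx => by rw [hx]; rfl)

theorem le_const_iff {b : ℝ} {f : Lp ℝ p μ} : f ≤ Lp.const p μ b ↔ ∀ᵐ x ∂μ, f x ≤ b := by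
  rw [← Lp.coeFn_le]
  exact Filter.eventually_congr ((Lp.coeFn_const p μ b).mono fun x hx => by rw [hx]; rfl)

variable [Fact (1 ≤ p)] {σ : α → α → ℝ} {A : Lp ℝ p μ →L[ℝ] Lp ℝ p μ}

theorem apply_const_eq_zero_of_ae_eq_integral
    (hA : ∀ z : Lp ℝ p μ, A z =ᵐ[μ] fun x => ∫ xs, σ x xs * (z xs - z x) ∂μ) (c : ℝ) :
    A (Lp.const p μ c) = 0 := by
  have hc := Lp.coeFn_const p μ c
  refine Lp.ext ?_
  filter_upwards [hA (Lp.const p μ c), hc, Lp.coeFn_zero ℝ p μ] with x hAx hcx h0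
  rw [hAx, h0, Pi.zero_apply]
  refine integral_eq_zero_of_ae ?_
  filter_upwards [hc] with xs hcxs
  simp only [hcx, hcxs, Function.const_apply, sub_self, mul_zero, Pi.zero_apply]

theorem add_smul_one_apply_nonneg_of_ae_eq_integral [IsProbabilityMeasure μ]
    (hσ : Measurable (Function.uncurry σ)) (hσ0 : ∀ x xs, 0 ≤ σ x xs) {C : ℝ}
    (hσC : ∀ x xs, σ x xs ≤ C)
    (hA : ∀ z : Lp ℝ p μ, A z =ᵐ[μ] fun x => ∫ xs, σ x xs * (z xs - z x) ∂μ)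
    {z : Lp ℝ p μ} (hz : 0 ≤ z) : 0 ≤ (A + C • 1) z := by
  rw [← Lp.coeFn_nonneg] at hz ⊢
  have hz_int : Integrable z μ := (Lp.memLp z).integrable Fact.out
  filter_upwards [Lp.coeFn_add (A z) (C • z), Lp.coeFn_smul C z, hA z, hz]
    with x hadd hsmul hAx hzx
  rw [add_apply, smul_apply, one_apply_eq_self, hadd, Pi.add_apply, hsmul, hAx, Pi.smul_apply,
    smul_eq_mul]
  exact integral_mul_sub_add_mul_nonneg (hσ.comp measurable_prodMk_left).aestronglyMeasurable
    (.of_forall (hσ0 x)) (.of_forall (hσC x)) hz_int hz hzx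

end MeasureTheory.Lp

theorem maximum_principle_general (d : ℕ)
    (μ : Measure (Fin d → ℝ))
    (hprob : μ Set.univ = 1)
    (σ : (Fin d → ℝ) → (Fin d → ℝ) → ℝ)
    (hσmeas : Measurable (Function.uncurry σ))
    (hσnonneg : ∀ x xs, 0 ≤ σ x xs)
    (C : ℝ) (hσbd : ∀ x xs, σ x xs ≤ C)
    (A : Lp ℝ 2 μ →L[ℝ] Lp ℝ 2 μ)
    (hA : ∀ z : Lp ℝ 2 μ,
      (A z : (Fin d → ℝ) → ℝ) =ᵐ[μ] fun x => ∫ xs, σ x xs * (z xs - z x) ∂μ)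
    (y0 : Lp ℝ 2 μ) :
    ((∀ᵐ x ∂μ, 0 ≤ y0 x) →
      ∀ t : ℝ, 0 ≤ t → ∀ᵐ x ∂μ, 0 ≤ (NormedSpace.exp (t • A) y0) x) ∧
    (∀ a b : ℝ, (∀ᵐ x ∂μ, a ≤ y0 x ∧ y0 x ≤ b) →
      ∀ t : ℝ, 0 ≤ t →
        ∀ᵐ x ∂μ, a ≤ (NormedSpace.exp (t • A) y0) x ∧
          (NormedSpace.exp (t • A) y0) x ≤ b) := by
  have : IsProbabilityMeasure μ := ⟨hprob⟩
  have hApos : ∀ z, 0 ≤ z → 0 ≤ (A + C • 1) z := fun _ hz =>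
    Lp.add_smul_one_apply_nonneg_of_ae_eq_integral hσmeas hσnonneg hσbd hA hz
  refine ⟨fun hy0 t ht => ?_, fun a b hab t ht => ?_⟩
  · exact (Lp.coeFn_nonneg _).2 <| ContinuousLinearMap.exp_smul_apply_nonneg_of_add_smul_one
      hApos ht ((Lp.coeFn_nonneg y0).1 hy0)
  · have hy0 : y0 ∈ Set.Icc (Lp.const 2 μ a) (Lp.const 2 μ b) :=
      ⟨Lp.const_le_iff.2 (hab.mono fun _ hx => hx.1), Lp.le_const_iff.2 (hab.mono fun _ hx => hx.2)⟩
    obtain ⟨hlo, hhi⟩ := ContinuousLinearMap.exp_smul_apply_mem_Icc hApos ht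
      (Lp.apply_const_eq_zero_of_ae_eq_integral hA a)
      (Lp.apply_const_eq_zero_of_ae_eq_integral hA b) hy0
    filter_upwards [Lp.const_le_iff.1 hlo, Lp.le_const_iff.1 hhi] with x hxa hxb using ⟨hxa, hxb⟩

theorem maximum_principle (d : ℕ) (Ω : Set (Fin d → ℝ))
    (hΩo : IsOpen Ω) (hΩb : Bornology.IsBounded Ω)
    (μ : Measure (Fin d → ℝ)) (hμ : μ = volume.restrict Ω)
    (hprob : μ Set.univ = 1)
    (σ : (Fin d → ℝ) → (Fin d → ℝ) → ℝ)
    (hσmeas : Measurable (Function.uncurry σ))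
    (hσnonneg : ∀ x xs, 0 ≤ σ x xs)
    (C : ℝ) (hσbd : ∀ x xs, σ x xs ≤ C)
    (A : Lp ℝ 2 μ →L[ℝ] Lp ℝ 2 μ)
    (hA : ∀ z : Lp ℝ 2 μ,
      (A z : (Fin d → ℝ) → ℝ) =ᵐ[μ] fun x => ∫ xs, σ x xs * (z xs - z x) ∂μ)
    (y0 : Lp ℝ 2 μ) :
    ((∀ᵐ x ∂μ, 0 ≤ y0 x) →
      ∀ t : ℝ, 0 ≤ t → ∀ᵐ x ∂μ, 0 ≤ (NormedSpace.exp (t • A) y0) x) ∧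
    (∀ a b : ℝ, (∀ᵐ x ∂μ, a ≤ y0 x ∧ y0 x ≤ b) →
      ∀ t : ℝ, 0 ≤ t →
        ∀ᵐ x ∂μ, a ≤ (NormedSpace.exp (t • A) y0) x ∧
          (NormedSpace.exp (t • A) y0) x ≤ b) :=
  maximum_principle_general d μ hprob σ hσmeas hσnonneg C hσbd A hA y0
end

section
/- Every z ∈ ker A* lies in L^∞(Ω), with ‖z‖_{L^∞} ≤ (‖σ‖_{L^∞}/δ) ‖z‖_{L²}. -/
/-! For a.e. `x`, `δ |z x| ≤ S x |z x| = |∫ σ(·, x) z| ≤ C ‖z‖_{L¹} ≤ C ‖z‖_{L²}`, the last step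
because `μ` is a probability measure. -/

open MeasureTheory

section

variable {α : Type*} [MeasurableSpace α] {μ : Measure α}

theorem integral_norm_le_Lp_norm [IsProbabilityMeasure μ] {E : Type*} [NormedAddCommGroup E]
    {p : ENNReal} [Fact (1 ≤ p)] (f : Lp E p μ) : ∫ x, ‖f x‖ ∂μ ≤ ‖f‖ := by
  have hf := Lp.memLp f
  rw [integral_norm_eq_lintegral_enorm hf.aestronglyMeasurable, ← eLpNorm_one_eq_lintegral_enorm,
    Lp.norm_def]
  exact ENNReal.toReal_mono hf.eLpNorm_ne_top
    (eLpNorm_le_eLpNorm_of_exponent_le Fact.out hf.aestronglyMeasurable)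

theorem norm_integral_mul_le_of_norm_le {k f : α → ℝ} {C : ℝ} (hf : Integrable f μ)
    (hk : ∀ x, ‖k x‖ ≤ C) : ‖∫ x, k x * f x ∂μ‖ ≤ C * ∫ x, ‖f x‖ ∂μ := by
  rw [← integral_const_mul]
  refine norm_integral_le_of_norm_le (hf.norm.const_mul C) (.of_forall fun x => ?_)
  rw [norm_mul]
  exact mul_le_mul_of_nonneg_right (hk x) (norm_nonneg _)

theorem abs_integral_mul_Lp_le [IsProbabilityMeasure μ] {k : α → ℝ} {C : ℝ}
    (hk : ∀ x, |k x| ≤ C) (f : Lp ℝ 2 μ) : |∫ x, k x * f x ∂μ| ≤ C * ‖f‖ := by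
  obtain ⟨x₀⟩ := nonempty_of_isProbabilityMeasure μ
  have hC : 0 ≤ C := (abs_nonneg _).trans (hk x₀)
  calc |∫ x, k x * f x ∂μ| ≤ C * ∫ x, ‖f x‖ ∂μ :=
        norm_integral_mul_le_of_norm_le ((Lp.memLp f).integrable one_le_two) hk
    _ ≤ C * ‖f‖ := mul_le_mul_of_nonneg_left (integral_norm_le_Lp_norm f) hC

end

theorem abs_le_div_mul_of_mul_eq {s δ a b C N : ℝ} (hδ : 0 < δ) (hδs : δ ≤ s) (h : s * a = b)
    (hb : |b| ≤ C * N) : |a| ≤ C / δ * N := by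
  rw [div_mul_eq_mul_div, le_div_iff₀ hδ]
  calc |a| * δ ≤ |a| * s := mul_le_mul_of_nonneg_left hδs (abs_nonneg a)
    _ = |b| := by rw [← h, abs_mul, abs_of_pos (hδ.trans_le hδs), mul_comm]
    _ ≤ C * N := hb

theorem ker_adjoint_Linfty_bound_general (d : ℕ)
    (μ : Measure (Fin d → ℝ))
    (hprob : μ Set.univ = 1)
    (σ : (Fin d → ℝ) → (Fin d → ℝ) → ℝ)
    (hσnonneg : ∀ x xs, 0 ≤ σ x xs)
    (C : ℝ) (hσbd : ∀ x xs, σ x xs ≤ C)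
    (S : (Fin d → ℝ) → ℝ)
    (δ : ℝ) (hδ : 0 < δ) (hSδ : ∀ᵐ x ∂μ, δ ≤ S x)
    (z : Lp ℝ 2 μ)
    (hz : ∀ᵐ x ∂μ, S x * z x = ∫ xs, σ xs x * z xs ∂μ) :
    ∀ᵐ x ∂μ, |z x| ≤ (C / δ) * ‖z‖ := by
  have : IsProbabilityMeasure μ := ⟨hprob⟩
  filter_upwards [hz, hSδ] with x hx hδx
  have hσabs : ∀ xs, |σ xs x| ≤ C := fun xs =>
    (abs_of_nonneg (hσnonneg xs x)).trans_le (hσbd xs x)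
  exact abs_le_div_mul_of_mul_eq hδ hδx hx (abs_integral_mul_Lp_le hσabs z)

theorem ker_adjoint_Linfty_bound (d : ℕ) (Ω : Set (Fin d → ℝ))
    (hΩo : IsOpen Ω) (hΩb : Bornology.IsBounded Ω)
    (μ : Measure (Fin d → ℝ)) (hμ : μ = volume.restrict Ω)
    (hprob : μ Set.univ = 1)
    (σ : (Fin d → ℝ) → (Fin d → ℝ) → ℝ)
    (hσmeas : Measurable (Function.uncurry σ))
    (hσnonneg : ∀ x xs, 0 ≤ σ x xs)
    (C : ℝ) (hσbd : ∀ x xs, σ x xs ≤ C)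
    (S : (Fin d → ℝ) → ℝ) (hS : ∀ᵐ x ∂μ, S x = ∫ xs, σ x xs ∂μ)
    (δ : ℝ) (hδ : 0 < δ) (hSδ : ∀ᵐ x ∂μ, δ ≤ S x)
    (z : Lp ℝ 2 μ)
    (hz : ∀ᵐ x ∂μ, S x * z x = ∫ xs, σ xs x * z xs ∂μ) :
    ∀ᵐ x ∂μ, |z x| ≤ (C / δ) * ‖z‖ :=
  ker_adjoint_Linfty_bound_general d μ hprob σ hσnonneg C hσbd S δ hδ hSδ z hz
end
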